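/- Let k be a field of characteristic 0 and let k[X₁,...,X_d]^+ be the subalgebra of the polynomial ring spanned by monomials of even total degree. Then TS^n(k[X₁,...,X_d]^+), identified inside the polynomial ring k[b_{ij} : i ∈ [d], j ∈ [n]] via b_{ij} = (Xᵢ in the j-th factor), equals the ring of invariants for the action of the hyperoctahedral group W = S_n ⋉ (ℤ/2ℤ)^n, where S_n permutes the index j and the j-th copy of ℤ/2ℤ acts by bᵢⱼ ↦ -bᵢⱼ simultaneously for all i. -/
import Mathlib


open MvPolynomial

lemma keyAux {k : Type*} [CommRing k] (n d : ℕ) (ε : Fin n → k)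
    (p : MvPolynomial (Fin d × Fin n) k) :
    aeval (fun q : Fin d × Fin n => C (ε q.2) * X q) p
      = ∑ m ∈ p.support, monomial m ((∏ j, ε j ^ (∑ i, m (i, j))) * coeff m p) := by
  conv_lhs => rw [p.as_sum, map_sum]
  refine Finset.sum_congr rfl fun m _ => ?_
  rw [aeval_monomial, monomial_eq]
  have h1 : (m.prod fun q e => (C (ε q.2) * X q : MvPolynomial (Fin d × Fin n) k) ^ e)
      = (m.prod fun q e => (C (ε q.2) : MvPolynomial (Fin d × Fin n) k) ^ e)
        * (m.prod fun q e => (X q : MvPolynomial (Fin d × Fin n) k) ^ e) := by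
    rw [← Finsupp.prod_mul]
    exact Finsupp.prod_congr fun q _ => mul_pow _ _ _
  have h2 : (m.prod fun q e => (C (ε q.2) : MvPolynomial (Fin d × Fin n) k) ^ e)
      = C (∏ j, ε j ^ (∑ i, m (i, j))) := by
    rw [Finsupp.prod]
    simp_rw [← map_pow]
    rw [← map_prod (C : k →+* MvPolynomial (Fin d × Fin n) k) (fun q => ε q.2 ^ m q) m.support]
    congr 1
    rw [Finset.prod_subset (Finset.subset_univ m.support)
      (by intro q _ hq; simp [Finsupp.notMem_support_iff.mp hq])]
    rw [Fintype.prod_prod_type]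
    rw [Finset.prod_comm]
    exact Finset.prod_congr rfl fun j _ => by simpa using Finset.prod_pow_eq_pow_sum Finset.univ (fun i => m (i, j)) (ε j)
  rw [h1, h2, algebraMap_eq, map_mul]
  ring

/-- Identified inside `k[b_{ij}]`, the symmetric tensors `TS^n(k[X₁,…,X_d]^+)` of the even
subalgebra — i.e. the polynomials invariant under the `S_n`-action permuting `j` and whose
monomials have even total degree in each block `{b_{ij} : i ∈ [d]}` — coincide with the ring
of invariants of the hyperoctahedral group `W = S_n ⋉ (ℤ/2ℤ)^n`, where `S_n` permutes the
index `j` and the `j`-th sign acts by `b_{ij} ↦ -b_{ij}` simultaneously for all `i`. -/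
theorem stmt9 {k : Type*} [Field k] [CharZero k] (n d : ℕ) :
    {p : MvPolynomial (Fin d × Fin n) k |
      (∀ σ : Equiv.Perm (Fin n), rename (fun q => (q.1, σ q.2)) p = p) ∧
      (∀ m ∈ p.support, ∀ j : Fin n, Even (∑ i : Fin d, m (i, j)))} =
    {p : MvPolynomial (Fin d × Fin n) k |
      (∀ σ : Equiv.Perm (Fin n), rename (fun q => (q.1, σ q.2)) p = p) ∧
      (∀ ε : Fin n → k, (∀ j, ε j = 1 ∨ ε j = -1) →
        aeval (fun q : Fin d × Fin n => C (ε q.2) * X q) p = p)} := by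
  ext p
  simp only [Set.mem_setOf_eq]
  refine and_congr_right fun _ => ⟨fun h ε hε => ?_, fun h m hm j0 => ?_⟩
  · rw [keyAux n d ε p]
    conv_rhs => rw [p.as_sum]
    refine Finset.sum_congr rfl fun m hm => ?_
    have h1 : ∀ j : Fin n, ε j ^ (∑ i, m (i, j)) = 1 := fun j => by
      rcases hε j with h1 | h1
      · rw [h1, one_pow]
      · rw [h1]; exact (h m hm j).neg_one_pow
    rw [Finset.prod_congr rfl fun j _ => h1 j, Finset.prod_const_one, one_mul]
  · set ε : Fin n → k := fun j => if j = j0 then -1 else 1 with hεdef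
    have hε : ∀ j, ε j = 1 ∨ ε j = -1 := fun j => by
      by_cases hj : j = j0 <;> simp [hεdef, hj]
    have heq := h ε hε
    rw [keyAux n d ε p] at heq
    have hc := congrArg (coeff m) heq
    rw [coeff_sum] at hc
    simp only [coeff_monomial] at hc
    rw [Finset.sum_ite_eq' p.support m
      (fun m' => (∏ j, ε j ^ (∑ i, m' (i, j))) * coeff m' p), if_pos hm] at hc
    have hne : coeff m p ≠ 0 := mem_support_iff.mp hm
    have hprod : (∏ j, ε j ^ (∑ i, m (i, j))) = 1 :=
      mul_right_cancel₀ hne (by rw [hc, one_mul])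
    have hprod2 : (∏ j, ε j ^ (∑ i, m (i, j))) = (-1 : k) ^ (∑ i, m (i, j0)) := by
      rw [Finset.prod_eq_single j0 (fun j _ hj => by simp [hεdef, hj]) (by simp)]
      simp [hεdef]
    exact (neg_one_pow_eq_one_iff_even (by norm_num : (-1 : k) ≠ 1)).mp (hprod2 ▸ hprod)
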